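/- In the BICA duopoly (quality q1 > q2) with MHR willingness-to-pay distribution F having density f > 0 on (0, v̄), there is a unique non-trivial local Nash equilibrium (p1*, p2*) with p1* > p2* > 0: p1* is the unique solution of F̄(p) = p f(p) and p2* is the unique solution of F̄(p) - F̄(p1*) = p f(p) on (0, p1*). -/

import Mathlib

/-- Seller 1 (higher quality) revenue in the BICA duopoly: all customers affording
`p1` buy from seller 1. -/
noncomputable def R1 (F : ℝ → ℝ) (p1 p2 : ℝ) : ℝ := p1 * (1 - F p1)

/-- Seller 2 (lower quality) revenue: customers with `p2 ≤ w < p1` buy from seller 2. -/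
noncomputable def R2 (F : ℝ → ℝ) (p1 p2 : ℝ) : ℝ := p2 * max (F p1 - F p2) 0

/-- `(p1, p2)` is a non-trivial local Nash equilibrium: prices in `[0, v̄]`, each a
local maximum of own revenue given the other price, and every seller with a positive
price earns strictly positive revenue. -/
def NTLNE (vbar : ℝ) (F : ℝ → ℝ) (p1 p2 : ℝ) : Prop :=
  p1 ∈ Set.Icc (0 : ℝ) vbar ∧ p2 ∈ Set.Icc (0 : ℝ) vbar ∧
  IsLocalMaxOn (fun q => R1 F q p2) (Set.Icc (0 : ℝ) vbar) p1 ∧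
  IsLocalMaxOn (fun q => R2 F p1 q) (Set.Icc (0 : ℝ) vbar) p2 ∧
  (0 < p1 → 0 < R1 F p1 p2) ∧ (0 < p2 → 0 < R2 F p1 p2)

/-
Each seller's revenue has the form `q (F z - F q)`, with `z = v̄` for seller 1 and `z = p1` for
seller 2. It vanishes at `0` and at `z`, so by Rolle it has a critical point in `(0, z)`. Its
derivative divided by `1 - F q` is `1 - (1 - F z) / (1 - F q) - q f q / (1 - F q)`, which is
strictly decreasing under MHR; hence the critical point is unique, the revenue increases before
it and decreases after it, and an interior local maximum can only be this point. Non-triviality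
keeps equilibrium prices off `0` and forces `p2 < p1`, which makes them interior.
-/

open Set Filter Topology

theorem isMaxOn_Icc_of_hasDerivAt {g g' : ℝ → ℝ} {a m b : ℝ} (ham : a ≤ m) (hmb : m ≤ b)
    (hg : ContinuousOn g (Icc a b)) (hderiv : ∀ x ∈ Ioo a b, HasDerivAt g (g' x) x)
    (hinc : ∀ x ∈ Ioo a m, 0 ≤ g' x) (hdec : ∀ x ∈ Ioo m b, g' x ≤ 0) :
    IsMaxOn g (Icc a b) m := by
  have hmono : MonotoneOn g (Icc a m) :=
    monotoneOn_of_hasDerivWithinAt_nonneg (convex_Icc a m) (hg.mono (Icc_subset_Icc_right hmb))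
      (fun x hx => by
        rw [interior_Icc] at hx ⊢
        exact (hderiv x ⟨hx.1, hx.2.trans_le hmb⟩).hasDerivWithinAt)
      (fun x hx => hinc x (by rwa [interior_Icc] at hx))
  have hanti : AntitoneOn g (Icc m b) :=
    antitoneOn_of_hasDerivWithinAt_nonpos (convex_Icc m b) (hg.mono (Icc_subset_Icc_left ham))
      (fun x hx => by
        rw [interior_Icc] at hx ⊢
        exact (hderiv x ⟨ham.trans_lt hx.1, hx.2⟩).hasDerivWithinAt)
      (fun x hx => hdec x (by rwa [interior_Icc] at hx))
  intro x hx
  rcases le_total x m with h | h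
  · exact hmono ⟨hx.1, h⟩ ⟨ham, le_rfl⟩ h
  · exact hanti ⟨le_rfl, hmb⟩ ⟨h, hx.2⟩ h

theorem not_isLocalMaxOn_Icc_left {g : ℝ → ℝ} {a b c : ℝ} (hab : a < b) (hac : a < c)
    (hg : ∀ x ∈ Ioo a c, g a < g x) : ¬ IsLocalMaxOn g (Icc a b) a := by
  intro hmax
  rw [IsLocalMaxOn, IsMaxFilter, nhdsWithin_Icc_eq_nhdsGE hab] at hmax
  obtain ⟨x, hx, hxc⟩ :=
    ((hmax.filter_mono (nhdsWithin_mono a Ioi_subset_Ici_self)).and (Ioo_mem_nhdsGT hac)).exists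
  exact (hg x hxc).not_ge hx

theorem IsLocalMaxOn.of_le_of_eq {g h : ℝ → ℝ} {s : Set ℝ} {a : ℝ} (hmax : IsLocalMaxOn h s a)
    (hle : ∀ x ∈ s, g x ≤ h x) (heq : g a = h a) : IsLocalMaxOn g s a := by
  filter_upwards [hmax, self_mem_nhdsWithin] with x hx hxs
  linarith [hle x hxs]

/-- Revenue at price `q` from the customers with willingness-to-pay in `[q, z)`: `R1` is the
case `z = v̄`, and `R2` the positive part of the case `z = p1`. -/
def bandRevenue (F : ℝ → ℝ) (z q : ℝ) : ℝ := q * (F z - F q)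

theorem hasDerivAt_bandRevenue {F : ℝ → ℝ} {d z q : ℝ} (hF : HasDerivAt F d q) :
    HasDerivAt (bandRevenue F z) ((F z - F q) - q * d) q :=
  ((hasDerivAt_id' q).mul (hF.const_sub (F z))).congr_deriv (by ring)

section

variable {F f : ℝ → ℝ} {vbar z : ℝ}

theorem bandRevenue_pos (hF : StrictMonoOn F (Icc 0 vbar)) (hz : z ≤ vbar) {x : ℝ}
    (hx : x ∈ Ioo 0 z) : 0 < bandRevenue F z x :=
  mul_pos hx.1 <| sub_pos.2 <|
    hF ⟨hx.1.le, (hx.2.trans_le hz).le⟩ ⟨hx.1.le.trans hx.2.le, hz⟩ hx.2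

theorem marginal_bandRevenue_neg_of_nonpos (hFv : F vbar = 1) (hF : StrictMonoOn F (Icc 0 vbar))
    (hf_pos : ∀ p ∈ Ioo 0 vbar, 0 < f p)
    (hMHR : MonotoneOn (fun p => f p / (1 - F p)) (Ioo 0 vbar)) (hz : z ∈ Icc 0 vbar)
    {x y : ℝ} (hx : x ∈ Ioo 0 vbar) (hy : y ∈ Ioo 0 vbar) (hxy : x < y)
    (h : F z - F x ≤ x * f x) : F z - F y < y * f y := by
  have hvbar : vbar ∈ Icc 0 vbar := ⟨hz.1.trans hz.2, le_rfl⟩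
  have hFy : F y < 1 := hFv ▸ hF (Ioo_subset_Icc_self hy) hvbar hy.2
  have hFxy : F x < F y := hF (Ioo_subset_Icc_self hx) (Ioo_subset_Icc_self hy) hxy
  have hFz : F z ≤ 1 := hFv ▸ hF.monotoneOn hz hvbar hz.2
  have hhaz : f x * (1 - F y) ≤ f y * (1 - F x) :=
    (div_le_div_iff₀ (by linarith) (by linarith)).1 (hMHR hx hy hxy.le)
  have hfx := hf_pos x hx
  nlinarith [mul_pos (sub_pos.2 hxy) (mul_pos hfx (sub_pos.2 hFy)), hy.1]

theorem exists_isMaxOn_bandRevenue (hFv : F vbar = 1) (hFcont : Continuous F)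
    (hFderiv : ∀ p ∈ Ioo 0 vbar, HasDerivAt F (f p) p) (hF : StrictMonoOn F (Icc 0 vbar))
    (hf_pos : ∀ p ∈ Ioo 0 vbar, 0 < f p)
    (hMHR : MonotoneOn (fun p => f p / (1 - F p)) (Ioo 0 vbar)) (hz : z ∈ Ioc 0 vbar) :
    ∃ p ∈ Ioo 0 z, (∀ x ∈ Ioo 0 vbar, F z - F x = x * f x ↔ x = p) ∧
      IsMaxOn (bandRevenue F z) (Icc 0 vbar) p := by
  have hderiv : ∀ x ∈ Ioo 0 vbar, HasDerivAt (bandRevenue F z) ((F z - F x) - x * f x) x :=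
    fun x hx => hasDerivAt_bandRevenue (hFderiv x hx)
  have hcont : Continuous (bandRevenue F z) := continuous_id.mul (continuous_const.sub hFcont)
  obtain ⟨p, hp, hcrit⟩ := exists_hasDerivAt_eq_zero hz.1 hcont.continuousOn
    (by simp [bandRevenue]) fun x hx => hderiv x ⟨hx.1, hx.2.trans_le hz.2⟩
  have hpI : p ∈ Ioo 0 vbar := ⟨hp.1, hp.2.trans_le hz.2⟩
  have crossing : ∀ x ∈ Ioo 0 vbar, ∀ y ∈ Ioo 0 vbar, x < y →
      F z - F x ≤ x * f x → F z - F y < y * f y := fun x hx y hy =>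
    marginal_bandRevenue_neg_of_nonpos hFv hF hf_pos hMHR (Ioc_subset_Icc_self hz) hx hy
  have hinc : ∀ x ∈ Ioo 0 p, 0 < (F z - F x) - x * f x := fun x hx => by
    by_contra! h
    linarith [crossing x ⟨hx.1, hx.2.trans hpI.2⟩ p hpI hx.2 (by linarith)]
  have hdec : ∀ x ∈ Ioo p vbar, (F z - F x) - x * f x < 0 := fun x hx => by
    linarith [crossing p hpI x ⟨hp.1.trans hx.1, hx.2⟩ hx.1 (by linarith)]
  refine ⟨p, hp, fun x hx => ⟨fun h => ?_, fun h => by rw [h]; linarith⟩,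
    isMaxOn_Icc_of_hasDerivAt hpI.1.le hpI.2.le hcont.continuousOn hderiv
      (fun x hx => (hinc x hx).le) (fun x hx => (hdec x hx).le)⟩
  rcases lt_trichotomy x p with hxp | hxp | hxp
  · linarith [hinc x ⟨hx.1, hxp⟩]
  · exact hxp
  · linarith [hdec x ⟨hxp, hx.2⟩]

theorem critical_of_isLocalMaxOn_bandRevenue (hFderiv : ∀ p ∈ Ioo 0 vbar, HasDerivAt F (f p) p)
    (hF : StrictMonoOn F (Icc 0 vbar)) (hz : z ∈ Ioc 0 vbar) {q : ℝ} (hq : q ∈ Icc 0 vbar)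
    (hmax : IsLocalMaxOn (bandRevenue F z) (Icc 0 vbar) q)
    (hpos : 0 < q → 0 < bandRevenue F z q) :
    q ∈ Ioo 0 z ∧ F z - F q = q * f q := by
  have hq0 : 0 < q := by
    refine hq.1.lt_of_ne fun h => ?_
    subst h
    refine not_isLocalMaxOn_Icc_left (hz.1.trans_le hz.2) hz.1 (fun x hx => ?_) hmax
    simpa [bandRevenue] using bandRevenue_pos hF hz.2 hx
  have hqz : q < z := by
    have := hpos hq0
    rw [bandRevenue, mul_pos_iff_of_pos_left hq0, sub_pos] at this
    exact (hF.lt_iff_lt hq (Ioc_subset_Icc_self hz)).1 this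
  have hqI : q ∈ Ioo 0 vbar := ⟨hq0, hqz.trans_le hz.2⟩
  have := (hmax.isLocalMax (Icc_mem_nhds hqI.1 hqI.2)).hasDerivAt_eq_zero
    (hasDerivAt_bandRevenue (hFderiv q hqI))
  exact ⟨⟨hq0, hqz⟩, by linarith⟩

end

section

variable {F f : ℝ → ℝ} {vbar p1 p2 : ℝ}

theorem R1_eq_bandRevenue (hFv : F vbar = 1) :
    R1 F p1 p2 = bandRevenue F vbar p1 := by
  rw [R1, bandRevenue, hFv]

theorem R2_eq_max_bandRevenue (hp2 : 0 ≤ p2) :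
    R2 F p1 p2 = max (bandRevenue F p1 p2) 0 := by
  rw [R2, bandRevenue, mul_max_of_nonneg _ _ hp2, mul_zero]

theorem bandRevenue_eq_R2 (hp2 : 0 ≤ p2) (hpos : 0 < p2 → 0 < R2 F p1 p2) :
    bandRevenue F p1 p2 = R2 F p1 p2 := by
  rcases hp2.eq_or_lt with rfl | hp2
  · simp [R2, bandRevenue]
  · have := hpos hp2
    rw [R2_eq_max_bandRevenue hp2.le] at this ⊢
    exact (max_eq_left ((lt_max_iff.1 this).resolve_right (lt_irrefl 0)).le).symm

theorem ntlne_of_isMaxOn (hFv : F vbar = 1) (hF : StrictMonoOn F (Icc 0 vbar))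
    (hp1 : p1 ∈ Ioo 0 vbar) (hp2 : p2 ∈ Ioo 0 p1)
    (hmax1 : IsMaxOn (bandRevenue F vbar) (Icc 0 vbar) p1)
    (hmax2 : IsMaxOn (bandRevenue F p1) (Icc 0 vbar) p2) : NTLNE vbar F p1 p2 := by
  refine ⟨⟨hp1.1.le, hp1.2.le⟩, ⟨hp2.1.le, (hp2.2.trans hp1.2).le⟩, ?_, ?_, fun _ => ?_,
    fun _ => ?_⟩
  · simpa only [R1_eq_bandRevenue hFv] using hmax1.localize
  · refine IsMaxOn.localize fun x hx => ?_
    rw [mem_ofPred_eq, R2_eq_max_bandRevenue hx.1, R2_eq_max_bandRevenue hp2.1.le]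
    exact max_le_max (hmax2 hx) le_rfl
  · rw [R1_eq_bandRevenue hFv]
    exact bandRevenue_pos hF le_rfl hp1
  · rw [R2_eq_max_bandRevenue hp2.1.le]
    exact lt_max_of_lt_left (bandRevenue_pos hF hp1.2.le hp2)

theorem NTLNE.critical (hvbar : 0 < vbar) (hFv : F vbar = 1)
    (hFderiv : ∀ p ∈ Ioo 0 vbar, HasDerivAt F (f p) p) (hF : StrictMonoOn F (Icc 0 vbar))
    (h : NTLNE vbar F p1 p2) :
    p1 ∈ Ioo 0 vbar ∧ F vbar - F p1 = p1 * f p1 ∧ p2 ∈ Ioo 0 p1 ∧ F p1 - F p2 = p2 * f p2 := by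
  obtain ⟨hp1, hp2, hloc1, hloc2, hpos1, hpos2⟩ := h
  simp only [R1_eq_bandRevenue hFv] at hloc1 hpos1
  obtain ⟨hp1I, hcrit1⟩ :=
    critical_of_isLocalMaxOn_bandRevenue hFderiv hF ⟨hvbar, le_rfl⟩ hp1 hloc1 hpos1
  have heq := bandRevenue_eq_R2 hp2.1 hpos2
  have hloc2' : IsLocalMaxOn (bandRevenue F p1) (Icc 0 vbar) p2 :=
    hloc2.of_le_of_eq (fun x hx => (R2_eq_max_bandRevenue hx.1).symm ▸ le_max_left _ _) heq
  obtain ⟨hp2I, hcrit2⟩ := critical_of_isLocalMaxOn_bandRevenue hFderiv hF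
    ⟨hp1I.1, hp1I.2.le⟩ hp2 hloc2' (fun h => heq ▸ hpos2 h)
  exact ⟨hp1I, hcrit1, hp2I, hcrit2⟩

end

theorem stmt17_general (vbar : ℝ) (hvbar : 0 < vbar) (F f : ℝ → ℝ)
    (hFv : F vbar = 1)
    (hFcont : Continuous F)
    (hFderiv : ∀ p ∈ Set.Ioo (0 : ℝ) vbar, HasDerivAt F (f p) p)
    (hf_pos : ∀ p ∈ Set.Ioo (0 : ℝ) vbar, 0 < f p)
    (hMHR : MonotoneOn (fun p => f p / (1 - F p)) (Set.Ioo (0 : ℝ) vbar)) :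
    ∃ p1 p2 : ℝ, NTLNE vbar F p1 p2 ∧
      0 < p2 ∧ p2 < p1 ∧
      (∀ x ∈ Set.Ioo (0 : ℝ) vbar, (1 - F x = x * f x ↔ x = p1)) ∧
      (∀ x ∈ Set.Ioo (0 : ℝ) p1, ((1 - F x) - (1 - F p1) = x * f x ↔ x = p2)) ∧
      (∀ q1 q2 : ℝ, NTLNE vbar F q1 q2 → q1 = p1 ∧ q2 = p2) := by
  have hF : StrictMonoOn F (Icc 0 vbar) :=
    strictMonoOn_of_hasDerivWithinAt_pos (convex_Icc 0 vbar) hFcont.continuousOn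
      (fun x hx => by rw [interior_Icc] at hx ⊢; exact (hFderiv x hx).hasDerivWithinAt)
      (fun x hx => hf_pos x (by rwa [interior_Icc] at hx))
  obtain ⟨p1, hp1, hiff1, hmax1⟩ :=
    exists_isMaxOn_bandRevenue hFv hFcont hFderiv hF hf_pos hMHR ⟨hvbar, le_rfl⟩
  obtain ⟨p2, hp2, hiff2, hmax2⟩ :=
    exists_isMaxOn_bandRevenue hFv hFcont hFderiv hF hf_pos hMHR ⟨hp1.1, hp1.2.le⟩
  refine ⟨p1, p2, ntlne_of_isMaxOn hFv hF hp1 hp2 hmax1 hmax2, hp2.1, hp2.2,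
    fun x hx => by rw [← hiff1 x hx, hFv], fun x hx => ?_, fun q1 q2 hq => ?_⟩
  · rw [← hiff2 x ⟨hx.1, hx.2.trans hp1.2⟩, show 1 - F x - (1 - F p1) = F p1 - F x by ring]
  · obtain ⟨hq1, hcrit1, hq2, hcrit2⟩ := hq.critical hvbar hFv hFderiv hF
    obtain rfl := (hiff1 q1 hq1).1 hcrit1
    exact ⟨rfl, (hiff2 q2 ⟨hq2.1, hq2.2.trans hp1.2⟩).1 hcrit2⟩

/-- In the BICA duopoly (quality `q1 > q2`) with an MHR willingness-to-pay
distribution `F` with positive continuous density `f` on `(0, v̄)`, there is a unique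
non-trivial local Nash equilibrium `(p1*, p2*)`, and it satisfies `p1* > p2* > 0`,
with `p1*` the unique solution of `F̄(p) = p f(p)` on `(0, v̄)` and `p2*` the unique
solution of `F̄(p) - F̄(p1*) = p f(p)` on `(0, p1*)`. -/
theorem stmt17 (vbar : ℝ) (hvbar : 0 < vbar) (F f : ℝ → ℝ)
    (hF0 : F 0 = 0) (hFv : F vbar = 1) (hFmono : Monotone F)
    (hFcont : Continuous F)
    (hFderiv : ∀ p ∈ Set.Ioo (0 : ℝ) vbar, HasDerivAt F (f p) p)
    (hf_cont : ContinuousOn f (Set.Ioo (0 : ℝ) vbar))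
    (hf_pos : ∀ p ∈ Set.Ioo (0 : ℝ) vbar, 0 < f p)
    (hMHR : MonotoneOn (fun p => f p / (1 - F p)) (Set.Ioo (0 : ℝ) vbar)) :
    ∃ p1 p2 : ℝ, NTLNE vbar F p1 p2 ∧
      0 < p2 ∧ p2 < p1 ∧
      (∀ x ∈ Set.Ioo (0 : ℝ) vbar, (1 - F x = x * f x ↔ x = p1)) ∧
      (∀ x ∈ Set.Ioo (0 : ℝ) p1, ((1 - F x) - (1 - F p1) = x * f x ↔ x = p2)) ∧
      (∀ q1 q2 : ℝ, NTLNE vbar F q1 q2 → q1 = p1 ∧ q2 = p2) :=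
  stmt17_general vbar hvbar F f hFv hFcont hFderiv hf_pos hMHR
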